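/- Let G be a finite p-group with G' powerful and d(G') ≤ 2, and let C = C_G(G'/(G')^p). Then the index |G : C| is at most p. -/

import Mathlib

/-- The subgroup generated by `n`-th powers of elements of `H`. -/
def subPow {G : Type*} [Group G] (H : Subgroup G) (n : ℕ) : Subgroup G :=
  Subgroup.closure ((· ^ n) '' (H : Set G))

/-- A subgroup `H` of a (finite) `p`-group is powerful if `H' ≤ H^p` for `p` odd,
or `H' ≤ H^4` for `p = 2`. -/
def IsPowerfulSubgroup (p : ℕ) {G : Type*} [Group G] (H : Subgroup G) : Prop :=
  if p = 2 then ⁅H, H⁆ ≤ subPow H 4 else ⁅H, H⁆ ≤ subPow H p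

open scoped commutatorElement

/-!
Because `G'` is powerful, `[G', G'] ≤ (G')^p` (for `p = 2` since `(G')^4 ≤ (G')^2`), so
`V = G'/(G')^p` is elementary abelian of rank at most `d(G') ≤ 2`, i.e. an `𝔽_p`-vector space of
dimension `d ≤ 2`. The subgroup `C` is the kernel of the conjugation action of `G` on `V`, so
`G/C` is a `p`-subgroup of `Aut V ≅ GL_d(𝔽_p)`. As `|GL_d(𝔽_p)| = ∏_{i<d} (p^d - p^i)` is not
divisible by `p^2` when `d ≤ 2`, we get `|G : C| ≤ p`.
-/

open Module

section SubPow

variable {G : Type*} [Group G] (H : Subgroup G)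

lemma pow_mem_subPow {x : G} (hx : x ∈ H) (n : ℕ) : x ^ n ∈ subPow H n :=
  Subgroup.subset_closure ⟨x, hx, rfl⟩

lemma subPow_le_subPow_of_dvd {m n : ℕ} (h : m ∣ n) : subPow H n ≤ subPow H m := by
  obtain ⟨k, rfl⟩ := h
  refine (Subgroup.closure_le _).mpr ?_
  rintro _ ⟨x, hx, rfl⟩
  show x ^ (m * k) ∈ subPow H m
  rw [pow_mul]
  exact pow_mem (pow_mem_subPow H hx m) k

instance subPow_normal [hH : H.Normal] (n : ℕ) : (subPow H n).Normal where
  conj_mem x hx g := by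
    have hcomap : subPow H n ≤ (subPow H n).comap (MulAut.conj g).toMonoidHom := by
      refine (Subgroup.closure_le _).mpr ?_
      rintro _ ⟨y, hy, rfl⟩
      simpa [conj_pow] using pow_mem_subPow H (hH.conj_mem y hy g) n
    exact hcomap hx

lemma IsPowerfulSubgroup.commutator_le_subPow {p : ℕ} (hH : IsPowerfulSubgroup p H) :
    ⁅H, H⁆ ≤ subPow H p := by
  unfold IsPowerfulSubgroup at hH
  split_ifs at hH with hp
  · subst hp
    exact hH.trans (subPow_le_subPow_of_dvd H (by norm_num))
  · exact hH

end SubPow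

namespace Subgroup

variable {G : Type*} [Group G] {H N : Subgroup G} [N.Normal]

lemma isMulCommutative_quotient_subgroupOf (h : ⁅H, H⁆ ≤ N) :
    IsMulCommutative (H ⧸ N.subgroupOf H) := by
  rw [Normal.quotient_commutative_iff_commutator_le]
  rw [← map_subtype_commutator] at h
  exact map_le_iff_le_comap.mp h

lemma pow_eq_one_of_subPow_le {n : ℕ} (h : subPow H n ≤ N) (v : H ⧸ N.subgroupOf H) :
    v ^ n = 1 := by
  induction v using QuotientGroup.induction_on with
  | H x =>
    rw [← QuotientGroup.mk_pow, QuotientGroup.eq_one_iff, mem_subgroupOf, coe_pow]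
    exact h (pow_mem_subPow H x.2 n)

variable (H N) [H.Normal]

lemma map_conjNormal_subgroupOf (g : G) :
    (N.subgroupOf H).map ((MulAut.conjNormal g : MulAut H) : H →* H) = N.subgroupOf H := by
  ext x
  rw [map_equiv_eq_comap_symm]
  simp only [mem_comap, mem_subgroupOf, MonoidHom.coe_coe, MulAut.conjNormal_symm_apply]
  exact ⟨fun h ↦ by simpa [mul_assoc] using ‹N.Normal›.conj_mem _ h g,
    fun h ↦ ‹N.Normal›.conj_mem' _ h g⟩

noncomputable def conjQuotient : G →* MulAut (H ⧸ N.subgroupOf H) where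
  toFun g := QuotientGroup.congr _ _ (MulAut.conjNormal g) (map_conjNormal_subgroupOf H N g)
  map_one' := by ext x; induction x using QuotientGroup.induction_on; simp
  map_mul' g h := by ext x; induction x using QuotientGroup.induction_on; simp

lemma conjQuotient_mk (g : G) (x : H) :
    conjQuotient H N g x = (MulAut.conjNormal g x : H ⧸ N.subgroupOf H) := rfl

lemma mem_ker_conjQuotient {g : G} :
    g ∈ (conjQuotient H N).ker ↔ ∀ a ∈ H, ⁅g, a⁆ ∈ N := by
  rw [MonoidHom.mem_ker, MulEquiv.ext_iff, QuotientGroup.mk_surjective.forall]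
  simp only [conjQuotient_mk, MulAut.one_apply, QuotientGroup.eq, mem_subgroupOf, Subtype.forall,
    coe_mul, coe_inv, MulAut.conjNormal_apply]
  refine forall₂_congr fun a _ ↦ ?_
  rw [‹N.Normal›.mem_comm_iff, ← inv_mem_iff, commutatorElement_def]
  simp [mul_assoc]

end Subgroup

def ZModModule.addAutEquivLinearEquiv (n : ℕ) (V : Type*) [AddCommGroup V] [Module (ZMod n) V] :
    (V ≃+ V) ≃ (V ≃ₗ[ZMod n] V) where
  toFun e := e.toLinearEquiv (ZMod.map_smul e)
  invFun e := e.toAddEquiv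
  left_inv _ := rfl
  right_inv _ := rfl

lemma ZModModule.card_addAut_eq_card_GL {p : ℕ} [Fact p.Prime] {V : Type*} [AddCommGroup V]
    [Module (ZMod p) V] [Finite V] :
    Nat.card (V ≃+ V) = Nat.card (GL (Fin (finrank (ZMod p) V)) (ZMod p)) :=
  Nat.card_congr <| (addAutEquivLinearEquiv p V).trans <|
    (LinearMap.GeneralLinearGroup.generalLinearEquiv _ _).symm.toEquiv.trans
    (Units.mapEquiv (LinearMap.toMatrixAlgEquiv (Module.finBasis (ZMod p) V)).toMulEquiv).toEquiv

lemma Matrix.not_sq_dvd_card_GL_of_le_two {p d : ℕ} [hp : Fact p.Prime] (hd : d ≤ 2) :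
    ¬ p ^ 2 ∣ Nat.card (GL (Fin d) (ZMod p)) := by
  have hp1 := hp.out.one_lt
  have hpp : p < p ^ 2 := by nlinarith
  rw [Matrix.card_GL_field, ZMod.card]
  intro hdvd
  interval_cases d
  · rw [Fin.prod_univ_zero] at hdvd
    have := Nat.eq_zero_of_dvd_of_lt hdvd (by omega)
    omega
  · rw [Fin.prod_univ_one, Fin.val_zero, pow_zero, pow_one] at hdvd
    have := Nat.eq_zero_of_dvd_of_lt hdvd (by omega)
    omega
  · rw [Fin.prod_univ_two, Fin.val_zero, Fin.val_one, pow_zero, pow_one] at hdvd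
    have hcop : Nat.Coprime (p ^ 2) (p ^ 2 - 1) :=
      (Nat.coprime_self_sub_right (by omega)).mpr (Nat.coprime_one_right _)
    have := Nat.eq_zero_of_dvd_of_lt (hcop.dvd_of_dvd_mul_left hdvd) (by omega)
    omega

section ElementaryAbelian

open scoped IsMulCommutative

variable {p : ℕ} [Fact p.Prime] {V : Type*} [Group V] [IsMulCommutative V]

lemma finrank_additive_le_rank [Module (ZMod p) (Additive V)] [Group.FG V] :
    finrank (ZMod p) (Additive V) ≤ Group.rank V := by
  classical
  obtain ⟨S, hcard, hS⟩ := Group.rank_spec V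
  set T := S.image Additive.ofMul
  have hspan : Submodule.span (ZMod p) (T : Set (Additive V)) = ⊤ := by
    refine eq_top_iff.mpr fun x _ ↦ ?_
    have hx : x.toMul ∈ Subgroup.closure (S : Set V) := hS ▸ Subgroup.mem_top _
    refine (Subgroup.closure_le (Subgroup.toAddSubgroup.symm
      (Submodule.span (ZMod p) (T : Set (Additive V))).toAddSubgroup)).mpr ?_ hx
    intro s hs
    show Additive.ofMul s ∈ Submodule.span (ZMod p) (T : Set (Additive V))
    exact Submodule.subset_span (Finset.mem_image_of_mem Additive.ofMul hs)
  rw [← hcard, ← finrank_top, ← hspan]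
  exact (finrank_span_finset_le_card T).trans Finset.card_image_le

lemma not_sq_dvd_card_mulAut [Finite V] (hexp : ∀ v : V, v ^ p = 1) (hrank : Group.rank V ≤ 2) :
    ¬ p ^ 2 ∣ Nat.card (MulAut V) := by
  let : Module (ZMod p) (Additive V) :=
    AddCommGroup.zmodModule fun x ↦ congrArg Additive.ofMul (hexp x.toMul)
  rw [Nat.card_congr MulEquiv.toAdditive, ZModModule.card_addAut_eq_card_GL (p := p)]
  exact Matrix.not_sq_dvd_card_GL_of_le_two ((finrank_additive_le_rank (p := p)).trans hrank)

end ElementaryAbelian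

lemma IsPGroup.card_le_of_not_sq_dvd {p : ℕ} [hp : Fact p.Prime] {M : Type*} [Group M] [Finite M]
    {P : Subgroup M} (hP : IsPGroup p P) (h : ¬ p ^ 2 ∣ Nat.card M) : Nat.card P ≤ p := by
  obtain ⟨k, hk⟩ := IsPGroup.iff_card.mp hP
  have hk1 : k ≤ 1 := by
    by_contra! hk2
    exact h ((pow_dvd_pow p hk2).trans (hk ▸ P.card_subgroup_dvd_card))
  calc Nat.card P = p ^ k := hk
    _ ≤ p ^ 1 := Nat.pow_le_pow_right hp.out.pos hk1
    _ = p := pow_one p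

/-- If `G` is a finite `p`-group with `G'` powerful and `d(G') ≤ 2`, and
`C = C_G(G'/(G')^p)`, then `|G : C| ≤ p`. -/
theorem index_centralizer_le
    {p : ℕ} [Fact p.Prime] {G : Type*} [Group G] [Finite G]
    (hG : IsPGroup p G)
    (hpow : IsPowerfulSubgroup p (commutator G))
    (hgen : ∃ a b : G, commutator G = Subgroup.closure {a, b})
    (C : Subgroup G)
    (hC : ∀ g : G, g ∈ C ↔ ∀ a ∈ commutator G, ⁅g, a⁆ ∈ subPow (commutator G) p) :
    C.index ≤ p := by
  classical
  obtain ⟨a, b, hab⟩ := hgen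
  set D := commutator G
  set N := subPow D p
  have := Subgroup.isMulCommutative_quotient_subgroupOf hpow.commutator_le_subPow
  have hrankD : Group.rank D ≤ 2 :=
    calc Group.rank D = Group.rank (Subgroup.closure (({a, b} : Finset G) : Set G)) :=
          Subgroup.rank_congr (by rw [Finset.coe_pair, hab])
      _ ≤ 2 := (Subgroup.rank_closure_finset_le_card _).trans Finset.card_le_two
  have hrank : Group.rank (D ⧸ N.subgroupOf D) ≤ 2 :=
    (Group.rank_le_of_surjective _ (QuotientGroup.mk'_surjective _)).trans hrankD
  have hker : C = (Subgroup.conjQuotient D N).ker :=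
    Subgroup.ext fun g ↦ (hC g).trans (Subgroup.mem_ker_conjQuotient D N).symm
  rw [hker, Subgroup.index_ker]
  exact (hG.of_surjective _ (MonoidHom.rangeRestrict_surjective _)).card_le_of_not_sq_dvd
    (not_sq_dvd_card_mulAut (Subgroup.pow_eq_one_of_subPow_le le_rfl) hrank)
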